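/- Let ζ = 2cos(2π/13) + 2cos(10π/13) and ζ′ = 2cos(4π/13) + 2cos(6π/13). Let A be the 6×22 integer matrix with rows r₁ = (1,1,1,1,1,1,0,0,0,0,0,0,0,0,0,0,0,0,0,0,0,0), r₂ = (0,1,1,2,1,0,1,1,1,1,1,1,1,1,0,0,0,0,1,1,1,1), r₃ = (0,2,1,1,1,3,2,2,2,2,2,2,2,2,1,1,1,1,1,1,1,1), r₄ = (0,4,1,2,4,2,3,3,3,3,4,4,4,4,3,3,3,3,1,1,1,1), r₅ = (0,5,1,4,2,3,3,3,3,3,5,5,5,5,4,4,4,4,1,1,1,1), r₆ = (0,3,1,1,2,2,1,1,1,1,3,3,3,3,2,2,2,2,1,1,1,1). Let v ∈ ℝ²² be the vector with entries ((7−5ζ′)/65, (12+5ζ+5ζ′)/65, (7−5ζ)/65, 1/5, 1/5, 1/5, 1/5, 1/5, 1/5, 1/5, (1+ζ+2ζ′)/13, (1+ζ+2ζ′)/13, (1+ζ+2ζ′)/13, (1+ζ+2ζ′)/13, (1+2ζ+ζ′)/13, (1+2ζ+ζ′)/13, (1+2ζ+ζ′)/13, (1+2ζ+ζ′)/13, (ζ′−ζ)/13,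 (ζ′−ζ)/13, (ζ′−ζ)/13, (ζ′−ζ)/13), in this order. Then AᵀA·v = (295 + 125ζ + 175ζ′)·v; that is, v is an eigenvector of AᵀA with eigenvalue 295 + 125ζ + 175ζ′. -/

import Mathlib

open Matrix Real

/-- `ζ = 2cos(2π/13) + 2cos(10π/13)`. -/
noncomputable def zeta : ℝ := 2 * Real.cos (2 * π / 13) + 2 * Real.cos (10 * π / 13)

/-- `ζ′ = 2cos(4π/13) + 2cos(6π/13)`. -/
noncomputable def zeta' : ℝ := 2 * Real.cos (4 * π / 13) + 2 * Real.cos (6 * π / 13)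

/-- The restriction matrix `A_{EH1}` of the extended Haagerup subfactor. -/
def A_EH1 : Matrix (Fin 6) (Fin 22) ℝ :=
  !![1,1,1,1,1,1,0,0,0,0,0,0,0,0,0,0,0,0,0,0,0,0;
     0,1,1,2,1,0,1,1,1,1,1,1,1,1,0,0,0,0,1,1,1,1;
     0,2,1,1,1,3,2,2,2,2,2,2,2,2,1,1,1,1,1,1,1,1;
     0,4,1,2,4,2,3,3,3,3,4,4,4,4,3,3,3,3,1,1,1,1;
     0,5,1,4,2,3,3,3,3,3,5,5,5,5,4,4,4,4,1,1,1,1;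
     0,3,1,1,2,2,1,1,1,1,3,3,3,3,2,2,2,2,1,1,1,1]

/-- The (rescaled) vector of Perron–Frobenius dimensions of the 22 simple
objects of the centre of extended Haagerup. -/
noncomputable def vEH : Fin 22 → ℝ :=
  ![(7 - 5 * zeta') / 65, (12 + 5 * zeta + 5 * zeta') / 65, (7 - 5 * zeta) / 65,
    1/5, 1/5, 1/5, 1/5, 1/5, 1/5, 1/5,
    (1 + zeta + 2 * zeta') / 13, (1 + zeta + 2 * zeta') / 13,
    (1 + zeta + 2 * zeta') / 13, (1 + zeta + 2 * zeta') / 13,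
    (1 + 2 * zeta + zeta') / 13, (1 + 2 * zeta + zeta') / 13,
    (1 + 2 * zeta + zeta') / 13, (1 + 2 * zeta + zeta') / 13,
    (zeta' - zeta) / 13, (zeta' - zeta) / 13,
    (zeta' - zeta) / 13, (zeta' - zeta) / 13]

/-! The numbers `c k = 2 cos (2πk/13)` satisfy `c j * c k = c (j + k) + c (j - k)`,
`c (13 - k) = c k` and `c 1 + ⋯ + c 6 = -1`.  Since `ζ = c 1 + c 5` and `ζ′ = c 2 + c 3`, this
makes `ℤ + ℤζ + ℤζ′` a ring, with `ζ² = 2 - 2ζ - ζ′`, `ζζ′ = ζ′ - 1` and `ζ′² = 3 + ζ - ζ′`.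
The eigenvector equation is then a finite computation: first `A v`, then `Aᵀ (A v)`, each
coordinate reduced modulo these three relations. -/

noncomputable def twoCos (n : ℕ) (k : ℤ) : ℝ := 2 * cos (2 * π * k / n)

theorem twoCos_zero (n : ℕ) : twoCos n 0 = 2 := by simp [twoCos]

theorem twoCos_mul (n : ℕ) (j k : ℤ) :
    twoCos n j * twoCos n k = twoCos n (j + k) + twoCos n (j - k) := by
  have h := two_mul_cos_mul_cos (2 * π * j / n) (2 * π * k / n)
  simp only [twoCos]
  push_cast
  rw [show 2 * π * (j + k) / n = 2 * π * j / n + 2 * π * k / n by ring,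
    show 2 * π * (j - k) / n = 2 * π * j / n - 2 * π * k / n by ring]
  linear_combination 2 * h

theorem twoCos_sub_left (n : ℕ) (k : ℤ) : twoCos n (n - k) = twoCos n k := by
  rcases eq_or_ne n 0 with rfl | hn
  · simp [twoCos]
  simp only [twoCos]
  rw [show 2 * π * ((n : ℤ) - k : ℤ) / n = 2 * π - 2 * π * k / n by push_cast; field_simp,
    cos_two_pi_sub]

open Finset in
theorem sum_range_twoCos {n : ℕ} (hn : 0 < n) :
    ∑ i ∈ range n, twoCos (2 * n + 1) (i + 1) = -1 := by
  set a := 2 * π / (2 * n + 1) with ha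
  have hsin : sin (a / 2) ≠ 0 := by
    apply (sin_pos_of_pos_of_lt_pi (by positivity) _).ne'
    rw [ha, div_div, div_lt_iff₀ (by positivity)]
    nlinarith [pi_pos, (Nat.one_le_cast.mpr hn : (1 : ℝ) ≤ n)]
  have hπ : sin (n * a / 2 + (n + 1) * a / 2) = 0 := by
    rw [← sin_pi]; congr 1; rw [ha]; field_simp; ring
  apply mul_left_cancel₀ hsin
  calc sin (a / 2) * ∑ i ∈ range n, twoCos (2 * n + 1) (i + 1)
      = 2 * (sin (a / 2) * ∑ i ∈ range n, cos (a * i + a)) := by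
        simp only [mul_sum, twoCos]; congr 1; ext i; rw [ha]; push_cast; ring_nf
    _ = sin (a / 2) * -1 := by
        rw [sin_mul_sum_cos, ← mul_assoc, two_mul_sin_mul_cos,
          show (n - 1) * a / 2 + a = (n + 1) * a / 2 by ring, hπ,
          show n * a / 2 - (n + 1) * a / 2 = -(a / 2) by ring, sin_neg]
        ring

theorem sum_twoCos_thirteen :
    twoCos 13 1 + twoCos 13 2 + twoCos 13 3 + twoCos 13 4 + twoCos 13 5 + twoCos 13 6 = -1 := by
  have h := sum_range_twoCos (n := 6) (by norm_num)
  simp only [Finset.sum_range_succ, Finset.sum_range_zero] at h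
  norm_num at h
  linear_combination h

theorem zeta_eq : zeta = twoCos 13 1 + twoCos 13 5 := by
  simp only [zeta, twoCos]; norm_num; ring_nf

theorem zeta'_eq : zeta' = twoCos 13 2 + twoCos 13 3 := by
  simp only [zeta', twoCos]; norm_num; ring_nf

theorem zeta_sq : zeta ^ 2 = 2 - 2 * zeta - zeta' := by
  have h11 := twoCos_mul 13 1 1
  have h51 := twoCos_mul 13 5 1
  have h55 := twoCos_mul 13 5 5
  have h10 := twoCos_sub_left 13 3
  norm_num [twoCos_zero] at h11 h51 h55 h10
  rw [zeta_eq, zeta'_eq]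
  linear_combination h11 + 2 * h51 + h55 + h10 + 2 * sum_twoCos_thirteen

theorem zeta_mul_zeta' : zeta * zeta' = zeta' - 1 := by
  have h21 := twoCos_mul 13 2 1
  have h31 := twoCos_mul 13 3 1
  have h52 := twoCos_mul 13 5 2
  have h53 := twoCos_mul 13 5 3
  have h7 := twoCos_sub_left 13 6
  have h8 := twoCos_sub_left 13 5
  norm_num at h21 h31 h52 h53 h7 h8
  rw [zeta_eq, zeta'_eq]
  linear_combination h21 + h31 + h52 + h53 + h7 + h8 + sum_twoCos_thirteen

theorem zeta'_sq : zeta' ^ 2 = 3 + zeta - zeta' := by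
  have h22 := twoCos_mul 13 2 2
  have h32 := twoCos_mul 13 3 2
  have h33 := twoCos_mul 13 3 3
  norm_num [twoCos_zero] at h22 h32 h33
  rw [zeta_eq, zeta'_eq]
  linear_combination h22 + 2 * h32 + h33 + sum_twoCos_thirteen

theorem A_EH1_mulVec_vEH : A_EH1 *ᵥ vEH =
    ![1, 2 + zeta', 4 + zeta + 2 * zeta', 7 + 3 * zeta + 4 * zeta',
      8 + 4 * zeta + 5 * zeta', 4 + 2 * zeta + 3 * zeta'] := by
  ext i
  fin_cases i <;> simp [A_EH1, vEH, mulVec, dotProduct, Fin.sum_univ_succ] <;> ring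

theorem stmt_11 :
    (A_EH1ᵀ * A_EH1).mulVec vEH = (295 + 125 * zeta + 175 * zeta') • vEH := by
  rw [← mulVec_mulVec, A_EH1_mulVec_vEH, mulVec_transpose]
  ext i
  fin_cases i <;> simp [A_EH1, vEH, vecMul, dotProduct, Fin.sum_univ_succ] <;>
    grind [zeta_sq, zeta_mul_zeta', zeta'_sq]
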